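/- Equivalently to the substitution description: the code ideal I(C) equals the elimination ideal (I_{H'(p)} + ⟨y_1 − 1, …, y_m − 1⟩) ∩ K[x_1,…,x_n]. -/

import Mathlib

/-!
Both ideals are the kernel of the syndrome map `x^a ↦ [H a]` from `K[x]` to the group algebra
`K[𝔽_p^m]`. For `I(C)` this is because `x^a - x^b ∈ I(C)` exactly when `a` and `b` have the same
syndrome, and the kernel of a monomial map into a group algebra is spanned by such binomials.
For the elimination ideal, substituting `y_j ↦ [e_j]` turns the toric map into the syndrome map
and kills every `y_j - 1`, which gives one inclusion. Conversely, if `H'a ≡ H'b (mod p)` then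
`x^a y^c` and `x^b y^d` have the same toric image for suitable `c, d`, so `x^a - x^b` lies in the
elimination ideal once `y = 1`.
-/

open MvPolynomial

/-- The code ideal I(C) = ⟨x^a − x^b : (a − b mod p) ∈ C⟩ + ⟨x_i^p − 1⟩. -/
noncomputable def codeIdeal (p : ℕ) (K : Type*) [Field K] {n : ℕ}
    (C : Submodule (ZMod p) (Fin n → ZMod p)) : Ideal (MvPolynomial (Fin n) K) :=
  Ideal.span
    ({f | ∃ a b : Fin n →₀ ℕ,
        (fun i => ((a i : ZMod p) - (b i : ZMod p))) ∈ C ∧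
        f = monomial a (1 : K) - monomial b 1} ∪
     {f | ∃ i : Fin n, f = X i ^ p - 1})

/-- The toric ideal of the extended matrix A(p) = (A | p·I_m). -/
noncomputable def toricIdealExt (p : ℕ) (K : Type*) [Field K] {m n : ℕ}
    (A : Matrix (Fin m) (Fin n) ℕ) : Ideal (MvPolynomial (Fin n ⊕ Fin m) K) :=
  RingHom.ker (MvPolynomial.aeval
    (Sum.elim (fun i => ∏ j : Fin m, (X j : MvPolynomial (Fin m) K) ^ A j i)
              (fun j => (X j : MvPolynomial (Fin m) K) ^ p))).toRingHom

open Matrix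

section MonomialMap

variable {σ R G : Type*} [AddCommMonoid G] (v : σ → G)

theorem aeval_single_monomial [CommSemiring R] (a : σ →₀ ℕ) (r : R) :
    aeval (fun i => AddMonoidAlgebra.single (v i) (1 : R)) (monomial a r) =
      AddMonoidAlgebra.single (Finsupp.linearCombination ℕ v a) r := by
  simp [aeval_monomial, Finsupp.linearCombination_apply, Finsupp.prod, Finsupp.sum]

theorem ker_aeval_single_le [CommRing R] {I : Ideal (MvPolynomial σ R)}
    (hI : ∀ a b : σ →₀ ℕ, Finsupp.linearCombination ℕ v a = Finsupp.linearCombination ℕ v b →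
      monomial a 1 - monomial b 1 ∈ I) :
    RingHom.ker (aeval fun i => AddMonoidAlgebra.single (v i) (1 : R)) ≤ I := by
  classical
  -- `L` sends `[g]` to the class of some monomial mapping to `[g]`; by `hI` the choice is
  -- irrelevant modulo `I`, so `L` inverts the map modulo `I`.
  let ℓ : Multiplicative G → MvPolynomial σ R ⧸ I := fun g =>
    if h : ∃ a, Finsupp.linearCombination ℕ v a = g.toAdd then
      Ideal.Quotient.mk I (monomial h.choose 1) else 0
  let L := AddMonoidAlgebra.liftNC (algebraMap R (MvPolynomial σ R ⧸ I) : R →+ _) ℓ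
  have hL : ∀ f, L (aeval (fun i => AddMonoidAlgebra.single (v i) 1) f) = Ideal.Quotient.mk I f := by
    intro f
    induction f using MvPolynomial.induction_on' with
    | monomial a r =>
      have hex : ∃ a', Finsupp.linearCombination ℕ v a' = Finsupp.linearCombination ℕ v a :=
        ⟨a, rfl⟩
      have hrep : Ideal.Quotient.mk I (monomial hex.choose 1) = Ideal.Quotient.mk I (monomial a 1) :=
        Ideal.Quotient.eq.2 (hI _ _ hex.choose_spec)
      simp only [L, ℓ, aeval_single_monomial, AddMonoidAlgebra.liftNC_single, AddMonoidHom.coe_coe,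
        toAdd_ofAdd, exists_apply_eq_apply, ↓reduceDIte, hrep]
      rw [← Ideal.Quotient.mk_algebraMap, ← map_mul, algebraMap_eq, C_mul_monomial, mul_one]
    | add f g hf hg => simp only [map_add, hf, hg]
  intro f hf
  rw [← Ideal.Quotient.eq_zero_iff_mem, ← hL, RingHom.mem_ker.1 hf, map_zero]

end MonomialMap

theorem linearCombination_columns_eq_mulVec {ι κ R : Type*} [Fintype κ] [CommSemiring R]
    (M : Matrix ι κ R) (a : κ →₀ ℕ) :
    Finsupp.linearCombination ℕ (fun i j => M j i) a = M *ᵥ fun i => (a i : R) := by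
  ext j
  simp [Finsupp.linearCombination_apply, Finsupp.sum_fintype, Matrix.mulVec, dotProduct, mul_comm]

noncomputable def syndromeMap (K : Type*) [CommSemiring K] {ι κ R : Type*} [CommSemiring R]
    (H : Matrix ι κ R) : MvPolynomial κ K →ₐ[K] AddMonoidAlgebra K (ι → R) :=
  aeval fun i => AddMonoidAlgebra.single (fun j => H j i) 1

theorem syndromeMap_monomial {K ι κ R : Type*} [CommSemiring K] [Fintype κ] [CommSemiring R]
    (H : Matrix ι κ R) (a : κ →₀ ℕ) (r : K) :
    syndromeMap K H (monomial a r) = AddMonoidAlgebra.single (H *ᵥ fun i => (a i : R)) r := by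
  rw [syndromeMap, aeval_single_monomial, linearCombination_columns_eq_mulVec]

theorem codeIdeal_eq_ker_syndromeMap {p : ℕ} {K : Type*} [Field K] {n m : ℕ}
    {C : Submodule (ZMod p) (Fin n → ZMod p)} {H : Matrix (Fin m) (Fin n) (ZMod p)}
    (hH : ∀ c, c ∈ C ↔ H *ᵥ c = 0) :
    codeIdeal p K C = RingHom.ker (syndromeMap K H) := by
  have hmem : ∀ a b : Fin n →₀ ℕ, (fun i => (a i : ZMod p) - b i) ∈ C ↔
      (H *ᵥ fun i => (a i : ZMod p)) = H *ᵥ fun i => (b i : ZMod p) := by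
    intro a b
    rw [hH]
    change H *ᵥ ((fun i => (a i : ZMod p)) - fun i => (b i : ZMod p)) = 0 ↔ _
    rw [Matrix.mulVec_sub, sub_eq_zero]
  apply le_antisymm
  · refine Ideal.span_le.2 ?_
    rintro _ (⟨a, b, hab, rfl⟩ | ⟨i, rfl⟩)
    · simp [syndromeMap_monomial, (hmem a b).1 hab]
    · rw [SetLike.mem_coe, RingHom.mem_ker, map_sub, map_pow, map_one, syndromeMap, aeval_X,
        AddMonoidAlgebra.single_pow, one_pow, ZModModule.char_nsmul_eq_zero,
        ← AddMonoidAlgebra.one_def, sub_self]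
  · refine ker_aeval_single_le _ fun a b hab => Ideal.subset_span (Or.inl ⟨a, b, ?_, rfl⟩)
    rwa [hmem, ← linearCombination_columns_eq_mulVec, ← linearCombination_columns_eq_mulVec]

section Toric

variable {p : ℕ} {K : Type*} [Field K] {n m : ℕ} (H' : Matrix (Fin m) (Fin n) ℕ)

variable (p K) in
noncomputable def toricMap : MvPolynomial (Fin n ⊕ Fin m) K →ₐ[K] MvPolynomial (Fin m) K :=
  aeval (Sum.elim (fun i => ∏ j : Fin m, (X j : MvPolynomial (Fin m) K) ^ H' j i)
    (fun j => (X j : MvPolynomial (Fin m) K) ^ p))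

theorem mem_toricIdealExt {u : MvPolynomial (Fin n ⊕ Fin m) K} :
    u ∈ toricIdealExt p K H' ↔ toricMap p K H' u = 0 :=
  Iff.rfl

theorem toricMap_prod_X_pow (a : Fin n → ℕ) (c : Fin m → ℕ) :
    toricMap p K H' ((∏ i, X (Sum.inl i) ^ a i) * ∏ j, X (Sum.inr j) ^ c j) =
      ∏ j, X j ^ (∑ i, H' j i * a i + p * c j) := by
  simp only [toricMap, map_mul, map_prod, map_pow, aeval_X, Sum.elim_inl, Sum.elim_inr,
    ← Finset.prod_pow, ← pow_mul]
  rw [Finset.prod_comm, ← Finset.prod_mul_distrib]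
  refine Finset.prod_congr rfl fun j _ => ?_
  rw [Finset.prod_pow_eq_pow_sum, ← pow_add]

variable (K n m) in
noncomputable def ySubOneIdeal : Ideal (MvPolynomial (Fin n ⊕ Fin m) K) :=
  Ideal.span {q | ∃ j : Fin m, q = X (Sum.inr j) - 1}

theorem prod_X_inl_pow_sub_mem (a b : Fin n → ℕ)
    (hab : ∀ j, ∑ i, H' j i * a i ≡ ∑ i, H' j i * b i [MOD p]) :
    (∏ i, X (Sum.inl i) ^ a i - ∏ i, X (Sum.inl i) ^ b i : MvPolynomial (Fin n ⊕ Fin m) K) ∈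
      toricIdealExt p K H' ⊔ ySubOneIdeal K n m := by
  set J := toricIdealExt p K H' ⊔ ySubOneIdeal K n m
  set N : (Fin n → ℕ) → Fin m → ℕ := fun a j => ∑ i, H' j i * a i
  have hy : ∀ c : Fin m → ℕ, Ideal.Quotient.mk J (∏ j, X (Sum.inr j) ^ c j) = 1 := by
    have hy1 (j : Fin m) : Ideal.Quotient.mk J (X (Sum.inr j)) = 1 :=
      Ideal.Quotient.eq.2 (Ideal.mem_sup_right (Ideal.subset_span ⟨j, rfl⟩))
    simp [hy1]
  have hN : ∀ j, N a j + p * (N b j / p) = N b j + p * (N a j / p) := by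
    intro j
    have hmod : N a j % p = N b j % p := hab j
    have := Nat.div_add_mod (N a j) p
    have := Nat.div_add_mod (N b j) p
    linarith
  rw [← Ideal.Quotient.eq]
  -- `x^a y^(N b / p)` and `x^b y^(N a / p)` have the same image under the toric map.
  calc Ideal.Quotient.mk J (∏ i, X (Sum.inl i) ^ a i)
      = Ideal.Quotient.mk J ((∏ i, X (Sum.inl i) ^ a i) * ∏ j, X (Sum.inr j) ^ (N b j / p)) := by
        rw [map_mul, hy, mul_one]
    _ = Ideal.Quotient.mk J ((∏ i, X (Sum.inl i) ^ b i) * ∏ j, X (Sum.inr j) ^ (N a j / p)) := by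
        refine Ideal.Quotient.eq.2 (Ideal.mem_sup_left ?_)
        rw [mem_toricIdealExt, map_sub, toricMap_prod_X_pow, toricMap_prod_X_pow, sub_eq_zero]
        exact Finset.prod_congr rfl fun j _ => congrArg _ (hN j)
    _ = Ideal.Quotient.mk J (∏ i, X (Sum.inl i) ^ b i) := by
        rw [map_mul, hy, mul_one]

variable {H : Matrix (Fin m) (Fin n) (ZMod p)}

theorem toricIdealExt_sup_ySubOneIdeal_le_ker (hH' : ∀ i j, (H' i j : ZMod p) = H i j) :
    toricIdealExt p K H' ⊔ ySubOneIdeal K n m ≤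
      RingHom.ker (aeval (Sum.elim (fun i => AddMonoidAlgebra.single (fun j => H j i) (1 : K))
        fun _ => 1)) := by
  have hfactor : (aeval fun j => AddMonoidAlgebra.single (Pi.single j (1 : ZMod p)) (1 : K)).comp
      (toricMap p K H') =
        aeval (Sum.elim (fun i => AddMonoidAlgebra.single (fun j => H j i) (1 : K)) fun _ => 1) := by
    refine MvPolynomial.algHom_ext fun s => ?_
    rcases s with i | j
    · simp only [AlgHom.comp_apply, toricMap, aeval_X, Sum.elim_inl, map_prod, map_pow,
        AddMonoidAlgebra.single_pow, one_pow, AddMonoidAlgebra.prod_single, Finset.prod_const_one]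
      congr 1
      ext j
      simp [Finset.sum_apply, Pi.single_apply, hH']
    · simp only [AlgHom.comp_apply, toricMap, aeval_X, Sum.elim_inr, map_pow,
        AddMonoidAlgebra.single_pow, one_pow, ZModModule.char_nsmul_eq_zero, AddMonoidAlgebra.one_def]
  refine sup_le (fun u hu => ?_) (Ideal.span_le.2 ?_)
  · rw [RingHom.mem_ker, ← hfactor, AlgHom.comp_apply, (mem_toricIdealExt H').1 hu, map_zero]
  · rintro _ ⟨j, rfl⟩
    simp

theorem rename_inl_mem_iff (hH' : ∀ i j, (H' i j : ZMod p) = H i j) (f : MvPolynomial (Fin n) K) :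
    rename Sum.inl f ∈ toricIdealExt p K H' ⊔ ySubOneIdeal K n m ↔ syndromeMap K H f = 0 := by
  constructor
  · intro hf
    have := toricIdealExt_sup_ySubOneIdeal_le_ker H' hH' hf
    rwa [RingHom.mem_ker, aeval_rename, Sum.elim_comp_inl] at this
  · refine fun hf => Ideal.mem_comap.1 (ker_aeval_single_le (I := Ideal.comap (rename Sum.inl) _) _
      (fun a b hab => ?_) hf)
    rw [Ideal.mem_comap]
    simp only [monomial_eq, C_1, one_mul, Finsupp.prod_fintype _ _ (fun _ => pow_zero _), map_sub,
      map_prod, map_pow, rename_X]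
    refine prod_X_inl_pow_sub_mem H' a b fun j => (ZMod.natCast_eq_natCast_iff _ _ _).1 ?_
    have := congrFun hab j
    rw [linearCombination_columns_eq_mulVec, linearCombination_columns_eq_mulVec] at this
    simpa [Matrix.mulVec, dotProduct, ← hH'] using this

end Toric

theorem stmt_3_general (p : ℕ) (K : Type*) [Field K] (n m : ℕ)
    (C : Submodule (ZMod p) (Fin n → ZMod p))
    (H : Matrix (Fin m) (Fin n) (ZMod p))
    (hH : ∀ c, c ∈ C ↔ H.mulVec c = 0)
    (H' : Matrix (Fin m) (Fin n) ℕ) (hH' : ∀ i j, ((H' i j : ZMod p)) = H i j) :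
    ∀ f : MvPolynomial (Fin n) K,
      f ∈ codeIdeal p K C ↔
        rename Sum.inl f ∈
          toricIdealExt p K H' ⊔
            Ideal.span {q | ∃ j : Fin m, q = (X (Sum.inr j) : MvPolynomial (Fin n ⊕ Fin m) K) - 1} := by
  intro f
  rw [codeIdeal_eq_ker_syndromeMap hH, RingHom.mem_ker]
  exact (rename_inl_mem_iff H' hH' f).symm

/-- the code ideal I(C) equals the elimination ideal
(I_{H'(p)} + ⟨y_1 − 1, …, y_m − 1⟩) ∩ K[x_1,…,x_n], where K[x] is embedded in
K[x,y] via the renaming of variables along Sum.inl. -/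
theorem stmt_3 (p : ℕ) (hp : p.Prime) (K : Type*) [Field K] (n m k : ℕ)
    (C : Submodule (ZMod p) (Fin n → ZMod p)) (hdim : Module.finrank (ZMod p) C = k)
    (H : Matrix (Fin m) (Fin n) (ZMod p))
    (hH : ∀ c, c ∈ C ↔ H.mulVec c = 0)
    (H' : Matrix (Fin m) (Fin n) ℕ) (hH' : ∀ i j, ((H' i j : ZMod p)) = H i j) :
    ∀ f : MvPolynomial (Fin n) K,
      f ∈ codeIdeal p K C ↔
        rename Sum.inl f ∈
          toricIdealExt p K H' ⊔
            Ideal.span {q | ∃ j : Fin m, q = (X (Sum.inr j) : MvPolynomial (Fin n ⊕ Fin m) K) - 1} :=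
  stmt_3_general p K n m C H hH H' hH'
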